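/- Let U be a finite complex of finite-dimensional k-vector spaces (concentrated in degrees 0,…,p) with homology dimensions μ_i = dim H_i(U) for 0 ≤ i ≤ p. If W is any finite exact complex of finite-dimensional k-vector spaces containing U as a subcomplex, then dim W_{i+1} ≥ dim U_{i+1} + μ_i for all 0 ≤ i ≤ p, and dim W₀ ≥ dim U₀. In particular the total dimension of W is at least dim U + Σ_{i=0}^{p} μ_i. -/

import Mathlib

/-!
Let `Z_i ⊆ U_i` be the cycles (`Z_0 = U_0`) and `B_i = δ(U_{i+1})`, so `μ_i = dim Z_i - dim B_i`.
Exactness of `W` gives `Z_i ⊆ im δ_i`, and rank–nullity for `δ_i` on `W_{i+1}` and on `U_{i+1}` yields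
`dim U_{i+1} + dim Z_i ≤ (dim B_i + dim ker δ_i) + dim im δ_i = dim B_i + dim W_{i+1}`.
Summing over the degrees where `W` is nonzero gives the total bound.
-/

namespace LinearMap

variable {k M N : Type*} [Field k] [AddCommGroup M] [Module k M] [AddCommGroup N] [Module k N]
  [FiniteDimensional k M]

theorem finrank_le_finrank_map_add_finrank_ker (f : M →ₗ[k] N) (S : Submodule k M) :
    Module.finrank k S ≤ Module.finrank k (S.map f) + Module.finrank k (ker f) := by
  rw [← range_domRestrict, ← (f.domRestrict S).finrank_range_add_finrank_ker]
  gcongr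
  exact finrank_le_finrank_of_injective (f := S.subtype.restrict fun _ hx => hx)
    fun _ _ h => Subtype.ext (Subtype.ext congr($h.1))

theorem finrank_add_finrank_sub_finrank_map_le (f : M →ₗ[k] N) (S : Submodule k M)
    {Z : Submodule k N} (hZ : Z ≤ range f) :
    Module.finrank k S + (Module.finrank k Z - Module.finrank k (S.map f)) ≤
      Module.finrank k M := by
  have hS := f.finrank_le_finrank_map_add_finrank_ker S
  have hZrange := Submodule.finrank_mono hZ
  have := f.finrank_range_add_finrank_ker
  have := Submodule.finrank_le S
  omega

end LinearMap

theorem Finset.sum_range_succ_add_sum_range_le {u w m : ℕ → ℕ} (p q : ℕ)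
    (h₀ : u 0 ≤ w 0) (hsucc : ∀ i, u (i + 1) + m i ≤ w (i + 1))
    (hw : ∀ i, q < i → w i = 0) :
    (∑ i ∈ range (q + 1), u i) + ∑ i ∈ range (p + 1), m i ≤ ∑ i ∈ range (q + 1), w i := by
  have hm : ∑ i ∈ range (p + 1), m i ≤ ∑ i ∈ range q, m i := by
    refine sum_le_sum_of_ne_zero fun i _ hi => mem_range.2 ?_
    by_contra! hqi
    have := hsucc i
    have := hw (i + 1) (by omega)
    omega
  have hsum : ∑ i ∈ range q, (u (i + 1) + m i) ≤ ∑ i ∈ range q, w (i + 1) :=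
    sum_le_sum fun i _ => hsucc i
  rw [sum_add_distrib] at hsum
  rw [sum_range_succ', sum_range_succ' w]
  omega

theorem dim_of_exact_complex_containing_subcomplex {k : Type*} [Field k]
    (W : ℕ → Type*) [∀ i, AddCommGroup (W i)] [∀ i, Module k (W i)]
    [∀ i, FiniteDimensional k (W i)]
    (δ : ∀ i, W (i + 1) →ₗ[k] W i)
    (hex0 : LinearMap.range (δ 0) = ⊤)
    (hex : ∀ i, LinearMap.ker (δ i) = LinearMap.range (δ (i + 1)))
    (U : ∀ i, Submodule k (W i))
    (p : ℕ)
    (q : ℕ) (hWq : ∀ i, q < i → Subsingleton (W i)) :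
    let μ : ℕ → ℕ := fun i =>
      match i with
      | 0 => Module.finrank k ↥(U 0) - Module.finrank k ↥(Submodule.map (δ 0) (U 1))
      | j + 1 =>
        Module.finrank k ↥(U (j + 1) ⊓ LinearMap.ker (δ j))
          - Module.finrank k ↥(Submodule.map (δ (j + 1)) (U (j + 2)))
    (Module.finrank k ↥(U 0) ≤ Module.finrank k (W 0)) ∧
    (∀ i, i ≤ p →
      Module.finrank k ↥(U (i + 1)) + μ i ≤ Module.finrank k (W (i + 1))) ∧
    ((∑ i ∈ Finset.range (q + 1), Module.finrank k ↥(U i))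
        + ∑ i ∈ Finset.range (p + 1), μ i
      ≤ ∑ i ∈ Finset.range (q + 1), Module.finrank k (W i)) := by
  intro μ
  have key : ∀ i, Module.finrank k (U (i + 1)) + μ i ≤ Module.finrank k (W (i + 1)) := by
    rintro (_ | j)
    · exact (δ 0).finrank_add_finrank_sub_finrank_map_le (U 1) (hex0 ▸ le_top)
    · exact (δ (j + 1)).finrank_add_finrank_sub_finrank_map_le (U (j + 2))
        (inf_le_right.trans (hex j).le)
  refine ⟨Submodule.finrank_le _, fun i _ => key i,
    Finset.sum_range_succ_add_sum_range_le p q (Submodule.finrank_le _) key fun i hi => ?_⟩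
  have := hWq i hi
  exact Module.finrank_zero_of_subsingleton
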